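/- If every vertex has threshold at least 1 (so no vertex activates spontaneously) and S, S' ⊆ V with Active[S,λ] ⊇ A and S' obtained from S by replacing a leaf (degree-1 vertex with threshold 1) v ∈ S by its unique neighbor, then |S'| ≤ |S| and Active[S',λ] ⊇ A. -/

import Mathlib

open scoped Classical

noncomputable def Active {V : Type*} [Fintype V] (G : SimpleGraph V) (t : V → ℕ)
    (S : Finset V) : ℕ → Finset V
  | 0 => S
  | i + 1 => Active G t S i ∪
      Finset.univ.filter (fun u =>
        t u ≤ (Finset.univ.filter (fun w => G.Adj u w ∧ w ∈ Active G t S i)).card)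

/-!
Replacing the leaf `v` by its neighbour `w` loses nothing after one round: `v` is activated
by `w` in round one, since `t v = 1`, and no other vertex than `w` counted `v` as an active
neighbour, while `w` is now a seed. Hence `Active S 1 ⊆ Active S' 1`, and since the process
started from `Active S 1` is the process started from `S` shifted by one round, monotonicity
in the seed set gives `Active S λ ⊆ Active S' λ` for `λ ≥ 1`.
-/

namespace Active

variable {V : Type*} [Fintype V] (G : SimpleGraph V) (t : V → ℕ)

@[simp] theorem zero (S : Finset V) : Active G t S 0 = S := rfl

theorem mem_succ {S : Finset V} {i : ℕ} {u : V} :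
    u ∈ Active G t S (i + 1) ↔ u ∈ Active G t S i ∨
      t u ≤ (Finset.univ.filter (fun w => G.Adj u w ∧ w ∈ Active G t S i)).card := by
  simp [Active]

theorem card_adj_mem_le_card_adj_mem {u : V} {X Y : Finset V}
    (h : ∀ x, G.Adj u x → x ∈ X → x ∈ Y) :
    (Finset.univ.filter (fun x => G.Adj u x ∧ x ∈ X)).card ≤
      (Finset.univ.filter (fun x => G.Adj u x ∧ x ∈ Y)).card :=
  Finset.card_le_card <| Finset.monotone_filter_right _ fun x _ hx => ⟨hx.1, h x hx.1 hx.2⟩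

theorem succ_eq_active_one (S : Finset V) (i : ℕ) :
    Active G t S (i + 1) = Active G t (Active G t S 1) i := by
  induction i with
  | zero => rfl
  | succ i ih => rw [Active.eq_2 G t S (i + 1), ih]; rfl

theorem mono {S S' : Finset V} (h : S ⊆ S') (i : ℕ) : Active G t S i ⊆ Active G t S' i := by
  induction i with
  | zero => exact h
  | succ i ih =>
    intro u hu
    rw [mem_succ] at hu ⊢
    exact hu.imp (@ih u) fun hu =>
      hu.trans (card_adj_mem_le_card_adj_mem G fun x _ hx => ih hx)

theorem one_subset_one_replace_leaf {v w : V} (hvw : G.Adj v w)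
    (hv : ∀ x, G.Adj v x → x = w) (htv : t v ≤ 1) (S : Finset V) :
    Active G t S 1 ⊆ Active G t (insert w (S.erase v)) 1 := by
  intro u hu
  rw [mem_succ, zero] at hu ⊢
  by_cases huv : u = v
  · subst huv
    refine Or.inr (htv.trans (Finset.one_le_card.mpr ⟨w, ?_⟩))
    simpa using hvw
  by_cases huw : u = w
  · subst huw
    exact Or.inl (Finset.mem_insert_self u _)
  rcases hu with hu | hu
  · exact Or.inl (Finset.mem_insert_of_mem (Finset.mem_erase.mpr ⟨huv, hu⟩))
  · refine Or.inr (hu.trans (card_adj_mem_le_card_adj_mem G fun x hux hx => ?_))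
    have hxv : x ≠ v := by
      rintro rfl
      exact huw (hv u hux.symm)
    exact Finset.mem_insert_of_mem (Finset.mem_erase.mpr ⟨hxv, hx⟩)

end Active

theorem leaf_replacement_general {V : Type*} [Fintype V] (T : SimpleGraph V)
    (t : V → ℕ) (lam : ℕ) (hlam : 1 ≤ lam) (A : Finset V)
    (S S' : Finset V) (v w : V)
    (hleaf : T.degree v = 1) (htv : t v = 1) (hvS : v ∈ S) (hvw : T.Adj v w)
    (hS' : S' = insert w (S.erase v))
    (hA : A ⊆ Active T t S lam) :
    S'.card ≤ S.card ∧ A ⊆ Active T t S' lam := by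
  subst hS'
  refine ⟨?_, ?_⟩
  · calc (insert w (S.erase v)).card ≤ (S.erase v).card + 1 := Finset.card_insert_le _ _
      _ = S.card := Finset.card_erase_add_one hvS
  · have hv : ∀ x, T.Adj v x → x = w := by
      obtain ⟨y, -, hy⟩ := SimpleGraph.degree_eq_one_iff_existsUnique_adj.mp hleaf
      exact fun x hx => (hy x hx).trans (hy w hvw).symm
    obtain ⟨i, rfl⟩ : ∃ i, lam = i + 1 := ⟨lam - 1, by omega⟩
    rw [Active.succ_eq_active_one] at hA ⊢
    exact hA.trans (Active.mono T t (Active.one_subset_one_replace_leaf T t hvw hv htv.le S) i)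

theorem leaf_replacement {V : Type*} [Fintype V] (T : SimpleGraph V) (hT : T.IsTree)
    (t : V → ℕ) (ht : ∀ u, 1 ≤ t u) (lam : ℕ) (hlam : 1 ≤ lam) (A : Finset V)
    (S S' : Finset V) (v w : V)
    (hleaf : T.degree v = 1) (htv : t v = 1) (hvS : v ∈ S) (hvw : T.Adj v w)
    (hS' : S' = insert w (S.erase v))
    (hA : A ⊆ Active T t S lam) :
    S'.card ≤ S.card ∧ A ⊆ Active T t S' lam :=
  leaf_replacement_general T t lam hlam A S S' v w hleaf htv hvS hvw hS' hA
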